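/- For every pair of differentiable functions ψ, φ with φ ≥ 0 and ψ > 0, and every 1 < q < 2, the generalized Picone inequality holds pointwise: ⟨∇ψ, ∇(φ^q/ψ^{q−1})⟩ ≤ |∇φ|^q · |∇ψ|^{2−q}. -/

import Mathlib

open scoped RealInnerProductSpace

private lemma young_aux {q : ℝ} (hq1 : 1 < q) {A s : ℝ} (hA : 0 ≤ A) (hs : 0 ≤ s) :
    q * s ^ (q - 1) * A ≤ A ^ q + (q - 1) * s ^ q := by
  have hq0 : (0:ℝ) < q := by linarith
  have hq1' : q - 1 ≠ 0 := by intro h; linarith [sub_eq_zero.mp h]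
  have hcj : q.HolderConjugate (Real.conjExponent q) := Real.HolderConjugate.conjExponent hq1
  have h := Real.young_inequality_of_nonneg hA (Real.rpow_nonneg hs (q - 1)) hcj
  have hpow : (s ^ (q - 1)) ^ (Real.conjExponent q) = s ^ q := by
    rw [← Real.rpow_mul hs]
    congr 1
    rw [Real.conjExponent]
    field_simp
  rw [hpow] at h
  have h2 : A ^ q / q + s ^ q / Real.conjExponent q = A ^ q / q + (q - 1) * s ^ q / q := by
    rw [Real.conjExponent, div_div_eq_mul_div]
    ring
  rw [h2] at h
  have := mul_le_mul_of_nonneg_left h hq0.le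
  calc q * s ^ (q - 1) * A = q * (A * s ^ (q - 1)) := by ring
    _ ≤ q * (A ^ q / q + (q - 1) * s ^ q / q) := this
    _ = A ^ q + (q - 1) * s ^ q := by field_simp

private lemma picone_key {q : ℝ} (hq1 : 1 < q) (hq2 : q < 2) {t A B : ℝ}
    (ht : 0 ≤ t) (hA : 0 ≤ A) (hB : 0 ≤ B) :
    q * t ^ (q - 1) * A * B - (q - 1) * t ^ q * B ^ 2 ≤ A ^ q * B ^ (2 - q) := by
  rcases eq_or_lt_of_le hB with hB0 | hB0
  · rw [← hB0]
    rw [Real.zero_rpow (by linarith : (2:ℝ) - q ≠ 0)]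
    simp
  · have hs : 0 ≤ t * B := mul_nonneg ht hB0.le
    have hy := young_aux hq1 hA hs
    have hBq : B ^ (q - 1) * B ^ (2 - q) = B := by
      rw [← Real.rpow_add hB0]
      norm_num
    have hBq2 : B ^ q * B ^ (2 - q) = B ^ 2 := by
      rw [← Real.rpow_add hB0]
      norm_num
    have hmul1 : (t * B) ^ (q - 1) = t ^ (q - 1) * B ^ (q - 1) := Real.mul_rpow ht hB0.le
    have hmul2 : (t * B) ^ q = t ^ q * B ^ q := Real.mul_rpow ht hB0.le
    have h := mul_le_mul_of_nonneg_right hy (Real.rpow_nonneg hB0.le (2 - q))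
    calc q * t ^ (q - 1) * A * B - (q - 1) * t ^ q * B ^ 2
        = (q * (t * B) ^ (q - 1) * A - (q - 1) * (t * B) ^ q) * B ^ (2 - q) := by
          rw [hmul1, hmul2]
          linear_combination (-(q * t ^ (q-1) * A)) * hBq + ((q-1) * t ^ q) * hBq2
      _ ≤ A ^ q * B ^ (2 - q) := by nlinarith [Real.rpow_nonneg hB0.le (2 - q)]

private lemma inner_gradient_eq {N : ℕ} (g : EuclideanSpace ℝ (Fin N) → ℝ)
    (x y : EuclideanSpace ℝ (Fin N)) :
    ⟪gradient g x, y⟫ = fderiv ℝ g x y := by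
  rw [gradient]
  exact InnerProductSpace.toDual_symm_apply

/-- **Generalized Picone inequality** (pointwise): for `1 < q < 2` and `ψ, φ`
differentiable at `x` with `φ x ≥ 0`, `ψ x > 0`, one has
`⟪∇ψ, ∇(φ^q/ψ^(q-1))⟫ ≤ |∇φ|^q · |∇ψ|^(2-q)` at `x`. -/
theorem generalized_picone_inequality {N : ℕ} (q : ℝ) (hq1 : 1 < q) (hq2 : q < 2)
    (ψ φ : EuclideanSpace ℝ (Fin N) → ℝ) (x : EuclideanSpace ℝ (Fin N))
    (hψ : DifferentiableAt ℝ ψ x) (hφ : DifferentiableAt ℝ φ x)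
    (hψpos : 0 < ψ x) (hφnn : 0 ≤ φ x) :
    ⟪gradient ψ x, gradient (fun y => (φ y) ^ q / (ψ y) ^ (q - 1)) x⟫
      ≤ ‖gradient φ x‖ ^ q * ‖gradient ψ x‖ ^ (2 - q) := by
  set u := φ x with hu
  set v := ψ x with hv
  set a := gradient φ x with ha
  set b := gradient ψ x with hb
  have hw0 : v ^ (q - 1) ≠ 0 := (Real.rpow_pos_of_pos hψpos _).ne'
  -- derivative of φ ^ q
  have hA : HasFDerivAt (fun y => φ y ^ q) ((q * u ^ (q - 1)) • fderiv ℝ φ x) x :=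
    (Real.hasDerivAt_rpow_const (Or.inr hq1.le)).comp_hasFDerivAt x hφ.hasFDerivAt
  -- derivative of ψ ^ (q-1)
  have hB : HasFDerivAt (fun y => ψ y ^ (q - 1))
      (((q - 1) * v ^ (q - 1 - 1)) • fderiv ℝ ψ x) x :=
    (Real.hasDerivAt_rpow_const (Or.inl hψpos.ne')).comp_hasFDerivAt x hψ.hasFDerivAt
  have hC : HasFDerivAt (fun y => (ψ y ^ (q - 1))⁻¹)
      ((-((v ^ (q - 1)) ^ 2)⁻¹) • (((q - 1) * v ^ (q - 1 - 1)) • fderiv ℝ ψ x)) x :=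
    (hasDerivAt_inv hw0).comp_hasFDerivAt x hB
  have hf : HasFDerivAt (fun y => φ y ^ q / ψ y ^ (q - 1))
      ((u ^ q) • ((-((v ^ (q - 1)) ^ 2)⁻¹) • (((q - 1) * v ^ (q - 1 - 1)) • fderiv ℝ ψ x))
        + ((v ^ (q - 1))⁻¹) • ((q * u ^ (q - 1)) • fderiv ℝ φ x)) x := by
    simp only [div_eq_mul_inv]
    exact hA.mul hC
  have hder : fderiv ℝ φ x b = ⟪a, b⟫ := (inner_gradient_eq φ x b).symm
  have hder2 : fderiv ℝ ψ x b = ‖b‖ ^ 2 := by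
    rw [← inner_gradient_eq ψ x b, ← hb, real_inner_self_eq_norm_sq]
  have hLHS : ⟪b, gradient (fun y => (φ y) ^ q / (ψ y) ^ (q - 1)) x⟫
      = u ^ q * (-((v ^ (q - 1)) ^ 2)⁻¹ * ((q - 1) * v ^ (q - 1 - 1) * ‖b‖ ^ 2))
        + (v ^ (q - 1))⁻¹ * (q * u ^ (q - 1) * ⟪a, b⟫) := by
    rw [real_inner_comm, inner_gradient_eq, hf.fderiv]
    simp [hder, hder2]
  rw [hLHS]
  have hab : ⟪a, b⟫ ≤ ‖a‖ * ‖b‖ := real_inner_le_norm a b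
  have step1 : u ^ q * (-((v ^ (q - 1)) ^ 2)⁻¹ * ((q - 1) * v ^ (q - 1 - 1) * ‖b‖ ^ 2))
        + (v ^ (q - 1))⁻¹ * (q * u ^ (q - 1) * ⟪a, b⟫)
      ≤ u ^ q * (-((v ^ (q - 1)) ^ 2)⁻¹ * ((q - 1) * v ^ (q - 1 - 1) * ‖b‖ ^ 2))
        + (v ^ (q - 1))⁻¹ * (q * u ^ (q - 1) * (‖a‖ * ‖b‖)) := by
    have h1 : q * u ^ (q - 1) * ⟪a, b⟫ ≤ q * u ^ (q - 1) * (‖a‖ * ‖b‖) :=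
      mul_le_mul_of_nonneg_left hab
        (by positivity)
    exact add_le_add_right (mul_le_mul_of_nonneg_left h1 (by positivity)) _
  refine step1.trans ?_
  have key := picone_key hq1 hq2 (t := u / v) (A := ‖a‖) (B := ‖b‖)
    (div_nonneg hφnn hψpos.le) (norm_nonneg a) (norm_nonneg b)
  have heq : u ^ q * (-((v ^ (q - 1)) ^ 2)⁻¹ * ((q - 1) * v ^ (q - 1 - 1) * ‖b‖ ^ 2))
        + (v ^ (q - 1))⁻¹ * (q * u ^ (q - 1) * (‖a‖ * ‖b‖))
      = q * (u / v) ^ (q - 1) * ‖a‖ * ‖b‖ - (q - 1) * (u / v) ^ q * ‖b‖ ^ 2 := by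
    rw [Real.div_rpow hφnn hψpos.le, Real.div_rpow hφnn hψpos.le]
    have hvq : v ^ q = v ^ (q - 1) * v := by
      rw [← Real.rpow_add_one hψpos.ne']
      norm_num
    have hvq2 : v ^ (q - 1 - 1) * v = v ^ (q - 1) := by
      rw [← Real.rpow_add_one hψpos.ne']
      norm_num
    have hw0' : (0:ℝ) < v ^ (q - 1) := Real.rpow_pos_of_pos hψpos _
    rw [hvq]
    field_simp
    linear_combination (-(u ^ q * (q - 1) * ‖b‖ ^ 2)) * hvq2
  rw [heq]
  exact key
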